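/- arXiv:1508.00792 — 3 statements merged into one kernel-verified Lean document; each statement's English description precedes it below -/
import Mathlib

section
/- Let N ≥ k ≥ 1, let U be an N×k complex matrix with U*U = I, and let X, Y be N×N Hermitian positive definite complex matrices. Then log det( U* ((X+Y)/2)⁻¹ U ) ≤ (1/2)·log det(U* X⁻¹ U) + (1/2)·log det(U* Y⁻¹ U). (Midpoint-convexity inequality used to prove Lemma 1.) -/
open Matrix
open scoped ComplexOrder

/-! Taking the Gram matrix of the columns of `[T, S⁻¹U]` with respect to `S` and its Schur
complement gives the variational formula `(U*S⁻¹U)⁻¹ = min {T*ST : U*T = 1}` in the Loewner order,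
attained at `T = S⁻¹U(U*S⁻¹U)⁻¹`. With `T` optimal for `M = (X+Y)/2` this makes
`S ↦ (U*S⁻¹U)⁻¹` midpoint operator concave:
`(U*M⁻¹U)⁻¹ = (T*XT + T*YT)/2 ≥ ((U*X⁻¹U)⁻¹ + (U*Y⁻¹U)⁻¹)/2`.
The determinant is monotone and midpoint log-concave on positive definite matrices
(diagonalise the pencil `(A, B)` simultaneously and apply AM-GM to its eigenvalues), and
`log det A⁻¹ = -log det A` turns the resulting inequality into the claim. -/

open scoped MatrixOrder

namespace Matrix
variable {𝕜 n : Type*} [RCLike 𝕜] [Fintype n] [DecidableEq n]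

lemma IsHermitian.det_smul_one_add_smul {G : Matrix n n 𝕜} (hG : G.IsHermitian) (a b : ℝ) :
    det ((a : 𝕜) • 1 + (b : 𝕜) • G) = ∏ i, ((a + b * hG.eigenvalues i : ℝ) : 𝕜) := by
  set φ := Unitary.conjStarAlgAut 𝕜 (Matrix n n 𝕜) hG.eigenvectorUnitary
  have hdiag : (a : 𝕜) • 1 + (b : 𝕜) • G =
      φ (diagonal fun i ↦ ((a + b * hG.eigenvalues i : ℝ) : 𝕜)) := by
    conv_lhs => rw [hG.spectral_theorem]
    rw [← map_one φ, ← map_smul, ← map_smul, ← map_add, ← diagonal_one, ← diagonal_smul,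
      ← diagonal_smul, diagonal_add]
    congr 2 with i
    simp
  rw [hdiag, Unitary.conjStarAlgAut_apply, det_mul, det_mul, mul_right_comm, ← det_mul,
    Unitary.mul_star_self_of_mem hG.eigenvectorUnitary.2, det_one, one_mul, det_diagonal]

lemma PosDef.exists_re_det_smul_add_smul {A B : Matrix n n 𝕜} (hA : A.PosDef)
    (hB : B.PosSemidef) : ∃ μ : n → ℝ, (∀ i, 0 ≤ μ i) ∧ ∀ a b : ℝ,
      RCLike.re (det ((a : 𝕜) • A + (b : 𝕜) • B)) = RCLike.re (det A) * ∏ i, (a + b * μ i) := by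
  obtain ⟨C, hC, rfl⟩ := CStarAlgebra.isStrictlyPositive_iff_eq_star_mul_self.mp
    hA.isStrictlyPositive
  have := hC.invertible
  rw [star_eq_conjTranspose]
  set G := C⁻¹ᴴ * B * C⁻¹
  have hG : G.PosSemidef := hB.conjTranspose_mul_mul_same C⁻¹
  have hBG : B = Cᴴ * G * C := by
    simp only [G, ← Matrix.mul_assoc, ← conjTranspose_mul, inv_mul_of_invertible,
      conjTranspose_one, Matrix.one_mul, inv_mul_cancel_right_of_invertible]
  refine ⟨hG.1.eigenvalues, hG.eigenvalues_nonneg, fun a b ↦ ?_⟩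
  have hpencil : (a : 𝕜) • (Cᴴ * C) + (b : 𝕜) • B
      = Cᴴ * ((a : 𝕜) • 1 + (b : 𝕜) • G) * C := by
    rw [hBG]; simp only [mul_add, add_mul, mul_smul_comm, smul_mul_assoc, mul_one]
  rw [hpencil, det_mul, det_mul, mul_right_comm, ← det_mul, hG.1.det_smul_one_add_smul,
    ← RCLike.ofReal_prod, RCLike.re_mul_ofReal]

section Compression
variable {m : Type*} [Fintype m] [DecidableEq m]

lemma PosDef.inv_conjTranspose_mul_inv_mul_le {S : Matrix m m 𝕜} (hS : S.PosDef)
    {U T : Matrix m n 𝕜} (hU : Function.Injective U.mulVec) (hUT : Uᴴ * T = 1) :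
    (Uᴴ * S⁻¹ * U)⁻¹ ≤ Tᴴ * S * T := by
  have hQ : (Uᴴ * S⁻¹ * U).PosDef := hS.inv.conjTranspose_mul_mul_same hU
  have := hQ.isUnit.invertible
  have := hS.isUnit.invertible
  have hTU : Tᴴ * U = 1 := by simpa using congr_arg (·ᴴ) hUT
  have hgram : (fromCols T (S⁻¹ * U))ᴴ * S * fromCols T (S⁻¹ * U)
      = fromBlocks (Tᴴ * S * T) 1 1ᴴ (Uᴴ * S⁻¹ * U) := by
    rw [conjTranspose_fromCols_eq_fromRows_conjTranspose, Matrix.mul_assoc, mul_fromCols,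
      fromRows_mul_fromCols]
    simp only [conjTranspose_mul, hS.1.inv.eq, ← Matrix.mul_assoc, mul_inv_of_invertible,
      inv_mul_cancel_right_of_invertible, Matrix.one_mul, hTU, hUT, conjTranspose_one]
  have hschur := (PosDef.fromBlocks₂₂ _ _ hQ).mp
    (hgram ▸ hS.posSemidef.conjTranspose_mul_mul_same (fromCols T (S⁻¹ * U)))
  simpa [le_iff] using hschur

lemma PosDef.exists_conjTranspose_mul_mul_eq_inv {S : Matrix m m 𝕜} (hS : S.PosDef)
    {U : Matrix m n 𝕜} (hU : Function.Injective U.mulVec) :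
    ∃ T : Matrix m n 𝕜, Uᴴ * T = 1 ∧ Tᴴ * S * T = (Uᴴ * S⁻¹ * U)⁻¹ := by
  have hQ : (Uᴴ * S⁻¹ * U).PosDef := hS.inv.conjTranspose_mul_mul_same hU
  have := hQ.isUnit.invertible
  have := hS.isUnit.invertible
  refine ⟨S⁻¹ * U * (Uᴴ * S⁻¹ * U)⁻¹, ?_, ?_⟩
  · simp only [← Matrix.mul_assoc, mul_inv_of_invertible]
  · calc (S⁻¹ * U * (Uᴴ * S⁻¹ * U)⁻¹)ᴴ * S * (S⁻¹ * U * (Uᴴ * S⁻¹ * U)⁻¹)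
        = (Uᴴ * S⁻¹ * U)⁻¹ * (Uᴴ * S⁻¹ * U) * (Uᴴ * S⁻¹ * U)⁻¹ := by
          rw [conjTranspose_mul, conjTranspose_mul, hS.1.inv.eq, hQ.1.inv.eq]
          simp only [Matrix.mul_assoc, mul_inv_cancel_left_of_invertible]
      _ = (Uᴴ * S⁻¹ * U)⁻¹ := by rw [inv_mul_of_invertible, Matrix.one_mul]

lemma PosDef.midpoint_inv_conjTranspose_mul_inv_mul_le {X Y : Matrix m m 𝕜} (hX : X.PosDef)
    (hY : Y.PosDef) {U : Matrix m n 𝕜} (hU : Function.Injective U.mulVec) :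
    (2 : 𝕜)⁻¹ • ((Uᴴ * X⁻¹ * U)⁻¹ + (Uᴴ * Y⁻¹ * U)⁻¹) ≤
      (Uᴴ * ((2 : 𝕜)⁻¹ • (X + Y))⁻¹ * U)⁻¹ := by
  have hhalf : (0 : 𝕜) < 2⁻¹ := by positivity
  obtain ⟨T, hUT, hT⟩ :=
    ((hX.add hY).smul hhalf).exists_conjTranspose_mul_mul_eq_inv hU
  have hXT := le_iff.mp (hX.inv_conjTranspose_mul_inv_mul_le hU hUT)
  have hYT := le_iff.mp (hY.inv_conjTranspose_mul_inv_mul_le hU hUT)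
  rw [← hT, le_iff]
  convert (hXT.add hYT).smul hhalf.le using 1
  simp only [Matrix.mul_smul, Matrix.smul_mul, Matrix.mul_add, Matrix.add_mul, smul_sub, smul_add]
  abel

end Compression

section Determinant
variable {A B : Matrix n n 𝕜}

lemma PosDef.re_det_pos (hA : A.PosDef) : 0 < RCLike.re (det A) :=
  (RCLike.pos_iff.mp hA.det_pos).1

lemma PosDef.log_re_det_inv (hA : A.PosDef) :
    Real.log (RCLike.re (det A⁻¹)) = -Real.log (RCLike.re (det A)) := by
  rw [det_nonsing_inv, Ring.inverse_eq_inv', hA.1.det_eq_prod_eigenvalues, ← RCLike.ofReal_prod,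
    ← RCLike.ofReal_inv, RCLike.ofReal_re, RCLike.ofReal_re, Real.log_inv]

lemma PosDef.re_det_le_of_le (hA : A.PosDef) (hAB : A ≤ B) :
    RCLike.re (det A) ≤ RCLike.re (det B) := by
  obtain ⟨μ, hμ, hdet⟩ := hA.exists_re_det_smul_add_smul (le_iff.mp hAB)
  have hprod : 1 ≤ ∏ i, (1 + 1 * μ i) :=
    Finset.one_le_prod fun i _ ↦ by linarith [hμ i]
  calc RCLike.re (det A) ≤ RCLike.re (det A) * ∏ i, (1 + 1 * μ i) :=
        le_mul_of_one_le_right hA.re_det_pos.le hprod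
    _ = RCLike.re (det B) := by simpa using (hdet 1 1).symm

lemma PosDef.log_re_det_midpoint_concave (hA : A.PosDef) (hB : B.PosDef) :
    (1 / 2) * Real.log (RCLike.re (det A)) + (1 / 2) * Real.log (RCLike.re (det B)) ≤
      Real.log (RCLike.re (det ((2 : 𝕜)⁻¹ • (A + B)))) := by
  obtain ⟨μ, hμ, hdet⟩ := hA.exists_re_det_smul_add_smul hB.posSemidef
  have hB_eq : RCLike.re (det B) = RCLike.re (det A) * ∏ i, μ i := by
    simpa using hdet 0 1
  have hmid_eq : RCLike.re (det ((2 : 𝕜)⁻¹ • (A + B))) =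
      RCLike.re (det A) * ∏ i, (2⁻¹ + 2⁻¹ * μ i) := by
    rw [← hdet, smul_add, show ((2⁻¹ : ℝ) : 𝕜) = 2⁻¹ by push_cast; rfl]
  have hamgm : ∏ i, μ i ≤ (∏ i, (2⁻¹ + 2⁻¹ * μ i)) ^ 2 := by
    rw [← Finset.prod_pow]
    exact Finset.prod_le_prod (fun i _ ↦ hμ i) fun i _ ↦ by nlinarith [sq_nonneg (μ i - 1)]
  have hdA := hA.re_det_pos
  have hp : 0 < ∏ i, μ i := pos_of_mul_pos_right (hB_eq ▸ hB.re_det_pos) hdA.le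
  have hq : 0 < ∏ i, (2⁻¹ + 2⁻¹ * μ i) := Finset.prod_pos fun i _ ↦ by linarith [hμ i]
  have hlog := Real.log_le_log hp hamgm
  rw [Real.log_pow] at hlog
  rw [hB_eq, hmid_eq, Real.log_mul hdA.ne' hp.ne', Real.log_mul hdA.ne' hq.ne']
  push_cast at hlog
  linarith

end Determinant

end Matrix

theorem logdet_compression_inv_midpoint_convex_general {N k : ℕ}
    (U : Matrix (Fin N) (Fin k) ℂ) (hU : Uᴴ * U = 1)
    (X Y : Matrix (Fin N) (Fin N) ℂ) (hX : X.PosDef) (hY : Y.PosDef) :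
    Real.log ((Uᴴ * (((2 : ℂ)⁻¹ • (X + Y))⁻¹) * U).det.re) ≤
      (1 / 2) * Real.log ((Uᴴ * X⁻¹ * U).det.re) +
        (1 / 2) * Real.log ((Uᴴ * Y⁻¹ * U).det.re) := by
  have hUinj : Function.Injective U.mulVec :=
    Function.LeftInverse.injective (g := Uᴴ.mulVec) fun x ↦ by rw [mulVec_mulVec, hU, one_mulVec]
  have hhalf : (0 : ℂ) < 2⁻¹ := by positivity
  have hPX := hX.inv.conjTranspose_mul_mul_same hUinj
  have hPY := hY.inv.conjTranspose_mul_mul_same hUinj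
  have hPM := ((hX.add hY).smul hhalf).inv.conjTranspose_mul_mul_same hUinj
  have hmid := (hPX.inv.add hPY.inv).smul hhalf
  have hmono := Real.log_le_log hmid.re_det_pos
    (hmid.re_det_le_of_le (hX.midpoint_inv_conjTranspose_mul_inv_mul_le hY hUinj))
  have hconc := hPX.inv.log_re_det_midpoint_concave hPY.inv
  rw [hPM.log_re_det_inv] at hmono
  rw [hPX.log_re_det_inv, hPY.log_re_det_inv] at hconc
  simp only [RCLike.re_to_complex] at hmono hconc
  linarith

/-- Midpoint convexity of S ↦ log det(U* S⁻¹ U) on Hermitian positive definite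
matrices, for U with orthonormal columns (U*U = I). -/
theorem logdet_compression_inv_midpoint_convex {N k : ℕ} (hk1 : 1 ≤ k) (hkN : k ≤ N)
    (U : Matrix (Fin N) (Fin k) ℂ) (hU : Uᴴ * U = 1)
    (X Y : Matrix (Fin N) (Fin N) ℂ) (hX : X.PosDef) (hY : Y.PosDef) :
    Real.log ((Uᴴ * (((2 : ℂ)⁻¹ • (X + Y))⁻¹) * U).det.re) ≤
      (1 / 2) * Real.log ((Uᴴ * X⁻¹ * U).det.re) +
        (1 / 2) * Real.log ((Uᴴ * Y⁻¹ * U).det.re) :=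
  logdet_compression_inv_midpoint_convex_general U hU X Y hX hY
end

section
/- (Theorem 1.) Let L₀ be an N×N Hermitian positive definite complex matrix and define the Picard iteration L_{k+1} = L_k + L_k Δ(L_k) L_k for k = 0,1,2,…. Then the sequence of log-likelihood values {φ(L_k)}_{k≥0} is monotonically increasing: φ(L_{k+1}) ≥ φ(L_k) for all k ≥ 0. -/
open Matrix
open scoped ComplexOrder

/-- Δ(L) = (1/n)∑ᵢ Uᵢ(Uᵢ*LUᵢ)⁻¹Uᵢ* − (I+L)⁻¹. -/
noncomputable def Delta {N n : ℕ} {k : Fin n → ℕ}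
    (U : (i : Fin n) → Matrix (Fin N) (Fin (k i)) ℂ)
    (L : Matrix (Fin N) (Fin N) ℂ) : Matrix (Fin N) (Fin N) ℂ :=
  (n : ℂ)⁻¹ • (∑ i, U i * ((U i)ᴴ * L * U i)⁻¹ * (U i)ᴴ) - (1 + L)⁻¹

/-- The DPP log-likelihood φ(L) = ∑ᵢ log det(Uᵢ*LUᵢ) − n·log det(I+L). -/
noncomputable def phi {N n : ℕ} {k : Fin n → ℕ}
    (U : (i : Fin n) → Matrix (Fin N) (Fin (k i)) ℂ)
    (L : Matrix (Fin N) (Fin N) ℂ) : ℝ :=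
  (∑ i, Real.log (((U i)ᴴ * L * U i).det.re)) - n * Real.log ((1 + L).det.re)

/-!
Write `L = R²` with `R = L^{1/2}` and `A = I + R Δ(L) R`, so that the Picard update is
`L' = R A R`. With `Πᵢ` the orthogonal projection onto the range of `R Uᵢ` and
`C = R (I+L)⁻¹ R = I − (I+L)⁻¹`, one has `A = (I+L)⁻¹ + (1/n) ∑ Πᵢ`, so `A` is positive definite
and `∑ Πᵢ = n (A − I + C)`.

Each observed term gains `log det (Uᵢ* L' Uᵢ) − log det (Uᵢ* L Uᵢ) ≥ tr (log A · Πᵢ)`: in the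
eigenbases of `A` and of the compression of `A` to the range of `Πᵢ`, the eigenvalues of the
compression are convex combinations of those of `A`, and `log` is concave. The normaliser loses
`log det (I+L') − log det (I+L) ≤ tr ((I+L)⁻¹ (L' − L)) = tr (C (A − I))`, by `log x ≤ x − 1`.
Hence `φ(L') − φ(L) ≥ n · tr (log A · (A − I + C) − C (A − I))`, and in the eigenbasis of `A`
this is a sum of terms `log a · (a − 1 + c) − (a − 1) c ≥ 0` with `a > 0` and `c ≤ 1`.
-/

open scoped MatrixOrder

lemma Real.sub_one_mul_le_log_mul {a c : ℝ} (ha : 0 < a) (hc : c ≤ 1) :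
    (a - 1) * c ≤ Real.log a * (a - 1 + c) := by
  have h1 : Real.log a ≤ a - 1 := Real.log_le_sub_one_of_pos ha
  have h2 : a - 1 ≤ a * Real.log a := by
    have := Real.log_le_sub_one_of_pos (inv_pos.mpr ha)
    rw [Real.log_inv] at this
    nlinarith [mul_inv_cancel₀ ha.ne']
  nlinarith [mul_nonneg (sub_nonneg.2 hc) (sub_nonneg.2 h1)]

namespace Matrix

section Square

variable {ι : Type*} [Fintype ι] [DecidableEq ι]

lemma IsHermitian.re_det_eq_prod_eigenvalues {A : Matrix ι ι ℂ} (hA : A.IsHermitian) :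
    A.det.re = ∏ j, hA.eigenvalues j := by
  rw [hA.det_eq_prod_eigenvalues]
  norm_cast

lemma IsHermitian.ofReal_re_det {A : Matrix ι ι ℂ} (hA : A.IsHermitian) :
    (A.det.re : ℂ) = A.det := by
  rw [hA.det_eq_prod_eigenvalues]
  norm_cast

lemma PosDef.re_det_pos_s5 {A : Matrix ι ι ℂ} (hA : A.PosDef) : 0 < A.det.re :=
  (Complex.pos_iff.mp hA.det_pos).1

lemma PosDef.log_re_det_le {A : Matrix ι ι ℂ} (hA : A.PosDef) :
    Real.log A.det.re ≤ A.trace.re - Fintype.card ι := by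
  set α := hA.isHermitian.eigenvalues
  have htr : A.trace.re = ∑ j, α j := by simp [α, hA.isHermitian.trace_eq_sum_eigenvalues]
  calc Real.log A.det.re = ∑ j, Real.log (α j) := by
        rw [hA.isHermitian.re_det_eq_prod_eigenvalues,
          Real.log_prod fun j _ => (hA.eigenvalues_pos j).ne']
    _ ≤ ∑ j, (α j - 1) :=
        Finset.sum_le_sum fun j _ => Real.log_le_sub_one_of_pos (hA.eigenvalues_pos j)
    _ = A.trace.re - Fintype.card ι := by simp [htr, Finset.sum_sub_distrib]

lemma PosDef.exists_posDef_mul_self_eq {P : Matrix ι ι ℂ} (hP : P.PosDef) :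
    ∃ R : Matrix ι ι ℂ, R.PosDef ∧ R * R = P :=
  ⟨CFC.sqrt P, hP.isStrictlyPositive.sqrt.posDef, CFC.sqrt_mul_sqrt_self _ hP.posSemidef.nonneg⟩

lemma PosDef.exists_posDef_mul_self_eq_inv {P : Matrix ι ι ℂ} (hP : P.PosDef) :
    ∃ T : Matrix ι ι ℂ, T.PosDef ∧ T * T = P⁻¹ ∧ T * P * T = 1 := by
  obtain ⟨T, hT, hTT⟩ := hP.inv.exists_posDef_mul_self_eq
  refine ⟨T, hT, hTT, hT.isUnit.mul_left_inj.mp ?_⟩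
  rw [mul_assoc, hTT, mul_assoc, mul_nonsing_inv _ ((isUnit_iff_isUnit_det P).mp hP.isUnit),
    mul_one, one_mul]

lemma PosDef.log_re_det_mul_mul_eq {P T X : Matrix ι ι ℂ} (hP : P.PosDef) (hT : T * T = P⁻¹)
    (hX : X.PosDef) :
    Real.log (T * X * T).det.re = Real.log X.det.re - Real.log P.det.re := by
  have hdet : (T * X * T).det = ((X.det.re / P.det.re : ℝ) : ℂ) := by
    rw [det_mul, det_mul, mul_right_comm, ← det_mul, hT, det_nonsing_inv,
      Ring.inverse_eq_inv, Complex.ofReal_div, hX.isHermitian.ofReal_re_det,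
      hP.isHermitian.ofReal_re_det, div_eq_mul_inv, mul_comm]
  rw [hdet, Complex.ofReal_re, Real.log_div hX.re_det_pos_s5.ne' hP.re_det_pos_s5.ne']

lemma PosDef.log_re_det_sub_le {P Q : Matrix ι ι ℂ} (hP : P.PosDef) (hQ : Q.PosDef) :
    Real.log Q.det.re - Real.log P.det.re ≤ (P⁻¹ * Q).trace.re - Fintype.card ι := by
  obtain ⟨T, hT, hTT, -⟩ := hP.exists_posDef_mul_self_eq_inv
  have hG : (T * Q * T).PosDef := by
    simpa [hT.isHermitian.eq] using
      hQ.conjTranspose_mul_mul_same (mulVec_injective_iff_isUnit.mpr hT.isUnit)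
  have htr : (T * Q * T).trace = (P⁻¹ * Q).trace := by
    rw [trace_mul_cycle, hTT]
  rw [← hP.log_re_det_mul_mul_eq hTT hQ, ← htr]
  exact hG.log_re_det_le

lemma log_re_det_one_add_mul_mul_sub_le {R A : Matrix ι ι ℂ} (hP : (1 + R * R).PosDef)
    (hQ : (1 + R * A * R).PosDef) :
    Real.log (1 + R * A * R).det.re - Real.log (1 + R * R).det.re ≤
      (R * (1 + R * R)⁻¹ * R * (A - 1)).trace.re := by
  have hdet := (isUnit_iff_isUnit_det _).mp hP.isUnit
  have h : (1 + R * R)⁻¹ * (1 + R * A * R) = 1 + (1 + R * R)⁻¹ * R * (A - 1) * R := by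
    rw [show 1 + R * A * R = (1 + R * R) + R * (A - 1) * R by noncomm_ring, mul_add,
      nonsing_inv_mul _ hdet]
    simp only [mul_assoc]
  have htr := hP.log_re_det_sub_le hQ
  rwa [h, trace_add, trace_one, trace_mul_cycle, Complex.add_re, Complex.natCast_re,
    add_sub_cancel_left, ← mul_assoc R] at htr

lemma mul_inv_one_add_mul_self_mul {R : Matrix ι ι ℂ} (h : IsUnit (1 + R * R)) :
    R * (1 + R * R)⁻¹ * R = 1 - (1 + R * R)⁻¹ := by
  have hdet := (isUnit_iff_isUnit_det _).mp h
  set P := 1 + R * R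
  have hPR : P * R = R * P := by simp only [P]; noncomm_ring
  have hcomm : R * P⁻¹ = P⁻¹ * R :=
    calc R * P⁻¹ = P⁻¹ * (P * R) * P⁻¹ := by rw [← mul_assoc, nonsing_inv_mul _ hdet, one_mul]
      _ = P⁻¹ * R := by rw [hPR, mul_assoc, mul_assoc, mul_nonsing_inv _ hdet, mul_one]
  rw [hcomm, mul_assoc, show R * R = P - 1 by simp [P], mul_sub, nonsing_inv_mul _ hdet, mul_one]

lemma IsHermitian.conjTranspose_eigenvectorUnitary_mul_mul {A : Matrix ι ι ℂ}
    (hA : A.IsHermitian) :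
    (hA.eigenvectorUnitary : Matrix ι ι ℂ)ᴴ * A * hA.eigenvectorUnitary =
      diagonal (fun j => (hA.eigenvalues j : ℂ)) := by
  rw [← star_eq_conjTranspose]
  simpa [Function.comp_def] using hA.conjStarAlgAut_star_eigenvectorUnitary

lemma IsHermitian.trace_cfc_mul {A : Matrix ι ι ℂ} (hA : A.IsHermitian) (f : ℝ → ℝ)
    (X : Matrix ι ι ℂ) :
    (cfc f A * X).trace = ∑ j, (f (hA.eigenvalues j) : ℂ) *
      ((hA.eigenvectorUnitary : Matrix ι ι ℂ)ᴴ * X * hA.eigenvectorUnitary) j j := by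
  rw [hA.cfc_eq, IsHermitian.cfc, Unitary.conjStarAlgAut_apply, ← star_eq_conjTranspose]
  simp only [mul_assoc]
  rw [trace_mul_comm]
  simp only [mul_assoc]
  simp [trace, diagonal_mul]

lemma PosDef.re_trace_mul_sub_one_le {A C : Matrix ι ι ℂ} (hA : A.PosDef)
    (hC : (1 - C).PosSemidef) :
    (C * (A - 1)).trace.re ≤ (cfc Real.log A * (A - 1 + C)).trace.re := by
  set E : Matrix ι ι ℂ := (hA.isHermitian.eigenvectorUnitary : Matrix ι ι ℂ)
  set α := hA.isHermitian.eigenvalues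
  have hEE : Eᴴ * E = 1 := Unitary.coe_star_mul_self _
  set c : ι → ℝ := fun j => (Eᴴ * C * E) j j |>.re
  have hc : ∀ j, c j ≤ 1 := by
    intro j
    have h := (Complex.nonneg_iff.mp ((hC.conjTranspose_mul_mul_same E).diag_nonneg (i := j))).1
    rw [mul_sub, sub_mul, mul_one, hEE] at h
    simpa [c] using h
  have hA' : IsSelfAdjoint A := hA.isHermitian
  have hsub : cfc (fun x : ℝ => x - 1) A = A - 1 := by
    rw [cfc_sub (fun x : ℝ => x) (fun _ => 1) A, cfc_id' ℝ A, cfc_const_one ℝ A]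
  have hlhs : (C * (A - 1)).trace.re = ∑ j, (α j - 1) * c j := by
    rw [trace_mul_comm, ← hsub, hA.isHermitian.trace_cfc_mul]
    simp [c, α, E, Complex.mul_re]
  have hrhs : (cfc Real.log A * (A - 1 + C)).trace.re =
      ∑ j, Real.log (α j) * (α j - 1 + c j) := by
    rw [hA.isHermitian.trace_cfc_mul, mul_add, add_mul, mul_sub, sub_mul, mul_one, hEE,
      hA.isHermitian.conjTranspose_eigenvectorUnitary_mul_mul]
    simp [c, α, E, Complex.mul_re, diagonal_apply_eq]
  rw [hlhs, hrhs]
  exact Finset.sum_le_sum fun j _ => Real.sub_one_mul_le_log_mul (hA.eigenvalues_pos j) (hc j)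

end Square

section Rectangular

variable {ι κ : Type*}

lemma conjTranspose_mul_diagonal_mul_apply_self [Fintype ι] [DecidableEq ι] (B : Matrix ι κ ℂ)
    (d : ι → ℂ) (m : κ) : (Bᴴ * diagonal d * B) m m = ∑ j, d j * Complex.normSq (B j m) := by
  rw [mul_apply]
  refine Finset.sum_congr rfl fun j _ => ?_
  rw [mul_diagonal, conjTranspose_apply, Complex.normSq_eq_conj_mul_self, RCLike.star_def]
  ring

lemma mul_conjTranspose_apply_self [Fintype κ] (B : Matrix ι κ ℂ) (j : ι) :
    (B * Bᴴ) j j = ∑ m, (Complex.normSq (B j m) : ℂ) := by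
  simp [mul_apply, Complex.mul_conj]

variable [Fintype ι] [Fintype κ]

lemma mulVec_injective_mul {A : Matrix ι ι ℂ} {B : Matrix ι κ ℂ}
    (hA : Function.Injective A.mulVec) (hB : Function.Injective B.mulVec) :
    Function.Injective (A * B).mulVec := by
  have h : (A * B).mulVec = A.mulVec ∘ B.mulVec := funext fun x => (mulVec_mulVec x A B).symm
  exact h ▸ hA.comp hB

variable [DecidableEq κ]

lemma mulVec_injective_of_mul_eq_one {A : Matrix ι κ ℂ} {B : Matrix κ ι ℂ} (h : B * A = 1) :
    Function.Injective A.mulVec :=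
  Function.LeftInverse.injective (g := B.mulVec) fun x => by rw [mulVec_mulVec, h, one_mulVec]

noncomputable def colProj (V : Matrix ι κ ℂ) : Matrix ι ι ℂ := V * (Vᴴ * V)⁻¹ * Vᴴ

lemma posSemidef_colProj {V : Matrix ι κ ℂ} (hV : Function.Injective V.mulVec) :
    (colProj V).PosSemidef :=
  (PosDef.conjTranspose_mul_self V hV).inv.posSemidef.mul_mul_conjTranspose_same V

variable [DecidableEq ι]

lemma PosDef.re_trace_cfc_log_mul_le {A : Matrix ι ι ℂ} (hA : A.PosDef) {W : Matrix ι κ ℂ}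
    (hW : Wᴴ * W = 1) :
    (cfc Real.log A * (W * Wᴴ)).trace.re ≤ Real.log (Wᴴ * A * W).det.re := by
  have hX := hA.conjTranspose_mul_mul_same (mulVec_injective_of_mul_eq_one hW)
  set E : Matrix ι ι ℂ := (hA.isHermitian.eigenvectorUnitary : Matrix ι ι ℂ)
  set Q : Matrix κ κ ℂ := (hX.isHermitian.eigenvectorUnitary : Matrix κ κ ℂ)
  set α := hA.isHermitian.eigenvalues
  set μ := hX.isHermitian.eigenvalues
  have hEE : Eᴴ * E = 1 := Unitary.coe_star_mul_self _
  have hEE' : E * Eᴴ = 1 := Unitary.coe_mul_star_self _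
  have hQQ : Qᴴ * Q = 1 := Unitary.coe_star_mul_self _
  have hQQ' : Q * Qᴴ = 1 := Unitary.coe_mul_star_self _
  -- Each eigenvalue `μ m` of `Wᴴ A W` is the convex combination `∑ j, c j m * α j` of the
  -- eigenvalues of `A`, so Jensen's inequality for `log` applies to it.
  set B := Eᴴ * W * Q
  set c : ι → κ → ℝ := fun j m => Complex.normSq (B j m)
  have hAE : E * diagonal (fun j => (α j : ℂ)) * Eᴴ = A := by
    rw [← hA.isHermitian.conjTranspose_eigenvectorUnitary_mul_mul]
    simp only [Matrix.mul_assoc]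
    rw [hEE', Matrix.mul_one, ← Matrix.mul_assoc, hEE', Matrix.one_mul]
  have hBB : Bᴴ * B = 1 := by
    simp only [B, conjTranspose_mul, conjTranspose_conjTranspose, Matrix.mul_assoc]
    rw [← Matrix.mul_assoc E, hEE', Matrix.one_mul, ← Matrix.mul_assoc Wᴴ, hW, Matrix.one_mul, hQQ]
  have hBAB : Bᴴ * diagonal (fun j => (α j : ℂ)) * B = diagonal (fun m => (μ m : ℂ)) :=
    calc Bᴴ * diagonal (fun j => (α j : ℂ)) * B
        = Qᴴ * (Wᴴ * (E * diagonal (fun j => (α j : ℂ)) * Eᴴ) * W) * Q := by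
          simp only [B, conjTranspose_mul, conjTranspose_conjTranspose, Matrix.mul_assoc]
      _ = diagonal (fun m => (μ m : ℂ)) := by
          rw [hAE]; exact hX.isHermitian.conjTranspose_eigenvectorUnitary_mul_mul
  have hcol : ∀ m, ∑ j, c j m = 1 := by
    intro m
    have h := conjTranspose_mul_diagonal_mul_apply_self B (fun _ => 1) m
    rw [diagonal_one, Matrix.mul_one, hBB, one_apply_eq] at h
    apply Complex.ofReal_injective
    simpa [c] using h.symm
  have hμ : ∀ m, μ m = ∑ j, c j m * α j := by
    intro m
    have h := conjTranspose_mul_diagonal_mul_apply_self B (fun j => (α j : ℂ)) m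
    rw [hBAB, diagonal_apply_eq] at h
    apply Complex.ofReal_injective
    simp [h, c, mul_comm]
  have hrow : ∀ j, ((Eᴴ * (W * Wᴴ) * E) j j).re = ∑ m, c j m := by
    intro j
    have h : Eᴴ * (W * Wᴴ) * E = B * Bᴴ := by
      simp only [B, conjTranspose_mul, conjTranspose_conjTranspose, Matrix.mul_assoc]
      rw [← Matrix.mul_assoc Q, hQQ', Matrix.one_mul]
    rw [h, mul_conjTranspose_apply_self]
    simp [c]
  calc (cfc Real.log A * (W * Wᴴ)).trace.re = ∑ j, Real.log (α j) * ∑ m, c j m := by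
        rw [hA.isHermitian.trace_cfc_mul]
        simp [← hrow, Complex.mul_re, α, E]
    _ = ∑ m, ∑ j, c j m * Real.log (α j) := by
        simp only [Finset.mul_sum]
        rw [Finset.sum_comm]
        simp only [mul_comm]
    _ ≤ ∑ m, Real.log (μ m) := by
        refine Finset.sum_le_sum fun m _ => ?_
        rw [hμ m]
        simpa using strictConcaveOn_log_Ioi.concaveOn.le_map_sum (t := Finset.univ)
          (fun j _ => Complex.normSq_nonneg (B j m)) (hcol m)
          (fun j _ => Set.mem_Ioi.2 (hA.eigenvalues_pos j))
    _ = Real.log (Wᴴ * A * W).det.re := by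
        rw [← Real.log_prod fun m _ => (hX.eigenvalues_pos m).ne',
          hX.isHermitian.re_det_eq_prod_eigenvalues]

lemma PosDef.re_trace_cfc_log_mul_colProj_le {A : Matrix ι ι ℂ} (hA : A.PosDef)
    {V : Matrix ι κ ℂ} (hV : Function.Injective V.mulVec) :
    (cfc Real.log A * colProj V).trace.re ≤
      Real.log (Vᴴ * A * V).det.re - Real.log (Vᴴ * V).det.re := by
  have hM := PosDef.conjTranspose_mul_self V hV
  obtain ⟨T, hT, hTT, hTMT⟩ := hM.exists_posDef_mul_self_eq_inv
  have hW : (V * T)ᴴ * (V * T) = 1 := by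
    rw [conjTranspose_mul, hT.isHermitian.eq, ← hTMT]
    simp only [Matrix.mul_assoc]
  have hWW : V * T * (V * T)ᴴ = colProj V := by
    rw [colProj, conjTranspose_mul, hT.isHermitian.eq, ← hTT]
    simp only [Matrix.mul_assoc]
  have hWAW : (V * T)ᴴ * A * (V * T) = T * (Vᴴ * A * V) * T := by
    rw [conjTranspose_mul, hT.isHermitian.eq]
    simp only [Matrix.mul_assoc]
  rw [← hWW, ← hM.log_re_det_mul_mul_eq hTT (hA.conjTranspose_mul_mul_same hV), ← hWAW]
  exact hA.re_trace_cfc_log_mul_le hW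

end Rectangular

end Matrix

section Picard

variable {N n : ℕ} {k : Fin n → ℕ} (U : (i : Fin n) → Matrix (Fin N) (Fin (k i)) ℂ)

noncomputable def picardStep (L : Matrix (Fin N) (Fin N) ℂ) : Matrix (Fin N) (Fin N) ℂ :=
  L + L * Delta U L * L

lemma picardStep_mul_self (R : Matrix (Fin N) (Fin N) ℂ) :
    picardStep U (R * R) = R * (1 + R * Delta U (R * R) * R) * R := by
  simp only [picardStep]
  noncomm_ring

lemma mul_Delta_mul {R : Matrix (Fin N) (Fin N) ℂ} (hR : Rᴴ = R) :
    R * Delta U (R * R) * R =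
      (n : ℂ)⁻¹ • ∑ i, colProj (R * U i) - R * (1 + R * R)⁻¹ * R := by
  simp only [Delta, colProj, Matrix.mul_sub, Matrix.sub_mul, Matrix.mul_smul, Matrix.smul_mul,
    Matrix.mul_sum, Matrix.sum_mul, conjTranspose_mul, hR, Matrix.mul_assoc]

lemma posDef_one_add_mul_Delta_mul (hU : ∀ i, (U i)ᴴ * U i = 1) {R : Matrix (Fin N) (Fin N) ℂ}
    (hR : R.PosDef) : (1 + R * Delta U (R * R) * R).PosDef := by
  have hRinj := mulVec_injective_iff_isUnit.mpr hR.isUnit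
  have hRR : (R * R).PosDef := by
    simpa [hR.isHermitian.eq] using PosDef.one.conjTranspose_mul_mul_same hRinj
  have hP : (1 + R * R).PosDef := PosDef.one.add_posSemidef hRR.posSemidef
  have hProj : ∀ i, (colProj (R * U i)).PosSemidef := fun i => posSemidef_colProj
    (mulVec_injective_mul hRinj (mulVec_injective_of_mul_eq_one (hU i)))
  rw [mul_Delta_mul U hR.isHermitian.eq, mul_inv_one_add_mul_self_mul hP.isUnit,
    show ∀ X : Matrix (Fin N) (Fin N) ℂ, 1 + (X - (1 - (1 + R * R)⁻¹)) = (1 + R * R)⁻¹ + X by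
      intro X; abel]
  exact hP.inv.add_posSemidef
    ((posSemidef_sum _ fun i _ => hProj i).smul (inv_nonneg.mpr (Nat.cast_nonneg n)))

lemma Matrix.PosDef.picardStep (hU : ∀ i, (U i)ᴴ * U i = 1) {L : Matrix (Fin N) (Fin N) ℂ}
    (hL : L.PosDef) : (picardStep U L).PosDef := by
  obtain ⟨R, hR, rfl⟩ := hL.exists_posDef_mul_self_eq
  rw [picardStep_mul_self]
  simpa [hR.isHermitian.eq] using (posDef_one_add_mul_Delta_mul U hU hR).conjTranspose_mul_mul_same
    (mulVec_injective_iff_isUnit.mpr hR.isUnit)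

lemma phi_le_phi_picardStep (hU : ∀ i, (U i)ᴴ * U i = 1) (hn : 0 < n)
    {L : Matrix (Fin N) (Fin N) ℂ} (hL : L.PosDef) : phi U L ≤ phi U (picardStep U L) := by
  have hL' := hL.picardStep U hU
  obtain ⟨R, hR, rfl⟩ := hL.exists_posDef_mul_self_eq
  rw [picardStep_mul_self] at hL' ⊢
  set A := 1 + R * Delta U (R * R) * R
  set C := R * (1 + R * R)⁻¹ * R
  have hA : A.PosDef := posDef_one_add_mul_Delta_mul U hU hR
  have hP : (1 + R * R).PosDef := PosDef.one.add_posSemidef hL.posSemidef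
  have hC : (1 - C).PosSemidef := by
    rw [show C = 1 - (1 + R * R)⁻¹ from mul_inv_one_add_mul_self_mul hP.isUnit, sub_sub_cancel]
    exact hP.inv.posSemidef
  have hnum : ∀ i, (cfc Real.log A * colProj (R * U i)).trace.re ≤
      Real.log ((U i)ᴴ * (R * A * R) * U i).det.re - Real.log ((U i)ᴴ * (R * R) * U i).det.re := by
    intro i
    simpa [conjTranspose_mul, hR.isHermitian.eq, Matrix.mul_assoc] using
      hA.re_trace_cfc_log_mul_colProj_le (mulVec_injective_mul
        (mulVec_injective_iff_isUnit.mpr hR.isUnit) (mulVec_injective_of_mul_eq_one (hU i)))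
  have hsum : ∑ i, colProj (R * U i) = (n : ℂ) • (A - 1 + C) := by
    rw [show A - 1 + C = (n : ℂ)⁻¹ • ∑ i, colProj (R * U i) by
      simp only [A, C, mul_Delta_mul U hR.isHermitian.eq]; abel, smul_smul,
      mul_inv_cancel₀ (Nat.cast_ne_zero.mpr hn.ne'), one_smul]
  have hgain : (n : ℝ) * (cfc Real.log A * (A - 1 + C)).trace.re ≤
      ∑ i, (Real.log ((U i)ᴴ * (R * A * R) * U i).det.re -
        Real.log ((U i)ᴴ * (R * R) * U i).det.re) := by
    refine le_of_eq_of_le ?_ (Finset.sum_le_sum fun i _ => hnum i)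
    rw [← Complex.re_sum, ← trace_sum, ← Matrix.mul_sum, hsum, Matrix.mul_smul, trace_smul,
      smul_eq_mul, ← Complex.ofReal_natCast, Complex.re_ofReal_mul]
  have hloss := log_re_det_one_add_mul_mul_sub_le hP (PosDef.one.add_posSemidef hL'.posSemidef)
  have htr := hA.re_trace_mul_sub_one_le hC
  simp only [phi, Finset.sum_sub_distrib] at hgain ⊢
  linarith [mul_le_mul_of_nonneg_left hloss (Nat.cast_nonneg (α := ℝ) n),
    mul_le_mul_of_nonneg_left htr (Nat.cast_nonneg (α := ℝ) n)]

end Picard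

theorem picard_loglik_monotone_general {N n : ℕ} (hn : 0 < n)
    {k : Fin n → ℕ}
    (U : (i : Fin n) → Matrix (Fin N) (Fin (k i)) ℂ)
    (hU : ∀ i, (U i)ᴴ * U i = 1)
    (L : ℕ → Matrix (Fin N) (Fin N) ℂ)
    (hL0 : (L 0).PosDef)
    (hrec : ∀ m : ℕ, L (m + 1) = L m + L m * Delta U (L m) * L m) :
    ∀ m : ℕ, phi U (L m) ≤ phi U (L (m + 1)) := by
  have hstep : ∀ m, L (m + 1) = picardStep U (L m) := hrec
  have hPD : ∀ m, (L m).PosDef := fun m =>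
    Nat.rec hL0 (fun m ih => hstep m ▸ ih.picardStep U hU) m
  exact fun m => hstep m ▸ phi_le_phi_picardStep U hU hn (hPD m)

/-- Theorem 1: along the Picard iteration L_{k+1} = L_k + L_k Δ(L_k) L_k started at a
Hermitian positive definite L₀, the log-likelihood φ is monotonically increasing. -/
theorem picard_loglik_monotone {N n : ℕ} (hN : 0 < N) (hn : 0 < n)
    {k : Fin n → ℕ} (hk1 : ∀ i, 1 ≤ k i) (hkN : ∀ i, k i ≤ N)
    (U : (i : Fin n) → Matrix (Fin N) (Fin (k i)) ℂ)
    (hU : ∀ i, (U i)ᴴ * U i = 1)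
    (L : ℕ → Matrix (Fin N) (Fin N) ℂ)
    (hL0 : (L 0).PosDef)
    (hrec : ∀ m : ℕ, L (m + 1) = L m + L m * Delta U (L m) * L m) :
    ∀ m : ℕ, phi U (L m) ≤ phi U (L (m + 1)) :=
  picard_loglik_monotone_general hn U hU L hL0 hrec
end

section
/- Let L be an N×N Hermitian positive definite complex matrix and let U be an N×k complex matrix (1 ≤ k ≤ N) with orthonormal columns, U*U = I. Then U (U* L U)⁻¹ U* ≼ L⁻¹ in the Loewner order; i.e. L⁻¹ − U(U*LU)⁻¹U* is positive semidefinite. Consequently, with Z(L) = (1/n)∑_{i=1}^n Uᵢ(Uᵢ*LUᵢ)⁻¹Uᵢ*, one has Z(L) ≼ L⁻¹. -/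
/-!
By the Schur complement criterion, `L⁻¹ - V (Vᴴ L V)⁻¹ Vᴴ ≽ 0` holds iff the block matrix
`[[Vᴴ L V, Vᴴ], [V, L⁻¹]]` is positive semidefinite. That matrix is the congruence
`diag(V, 1)ᴴ [[L, 1], [1, L⁻¹]] diag(V, 1)`, and `[[L, 1], [1, L⁻¹]] ≽ 0` because its Schur
complement `L⁻¹ - 1 L⁻¹ 1` vanishes. The bound for the average `Z(L)` follows since the
Loewner cone is convex.
-/

open Matrix
open scoped ComplexOrder

namespace Matrix

variable {𝕜 m n : Type*} [RCLike 𝕜]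

lemma posSemidef_sub_inv_card_smul_sum {ι : Type*} [Fintype ι] [Nonempty ι] {A : Matrix n n 𝕜}
    {X : ι → Matrix n n 𝕜} (hX : ∀ i, (A - X i).PosSemidef) :
    (A - (Fintype.card ι : 𝕜)⁻¹ • ∑ i, X i).PosSemidef := by
  have hcard : (Fintype.card ι : 𝕜) ≠ 0 := Nat.cast_ne_zero.mpr Fintype.card_ne_zero
  have : A - (Fintype.card ι : 𝕜)⁻¹ • ∑ i, X i = (Fintype.card ι : 𝕜)⁻¹ • ∑ i, (A - X i) := by
    rw [Finset.sum_sub_distrib, smul_sub, Finset.sum_const, Finset.card_univ,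
      ← Nat.cast_smul_eq_nsmul 𝕜, inv_smul_smul₀ hcard]
  rw [this]
  exact (posSemidef_sum _ fun i _ => hX i).smul (by positivity)

variable [Fintype m] [Fintype n] [DecidableEq m]

lemma PosDef.conjTranspose_mul_mul_of_conjTranspose_mul_self_eq_one {L : Matrix n n 𝕜}
    (hL : L.PosDef) {V : Matrix n m 𝕜} (hV : Vᴴ * V = 1) : (Vᴴ * L * V).PosDef :=
  hL.conjTranspose_mul_mul_same fun x y hxy => by
    simpa [mulVec_mulVec, hV] using congrArg (Vᴴ *ᵥ ·) hxy

variable [DecidableEq n]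

lemma PosDef.posSemidef_fromBlocks_one_one_inv {L : Matrix n n 𝕜} (hL : L.PosDef) :
    (fromBlocks L 1 1 L⁻¹).PosSemidef := by
  let := hL.isUnit.invertible
  simpa using (hL.fromBlocks₁₁ (1 : Matrix n n 𝕜) L⁻¹).mpr (by simpa using PosSemidef.zero)

lemma PosDef.posSemidef_inv_sub_mul_inv_conjTranspose_mul_mul {L : Matrix n n 𝕜} (hL : L.PosDef)
    {V : Matrix n m 𝕜} (hV : (Vᴴ * L * V).PosDef) :
    (L⁻¹ - V * (Vᴴ * L * V)⁻¹ * Vᴴ).PosSemidef := by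
  let := hV.isUnit.invertible
  let D : Matrix (n ⊕ n) (m ⊕ n) 𝕜 := fromBlocks V 0 0 1
  have hblock : fromBlocks (Vᴴ * L * V) Vᴴ Vᴴᴴ L⁻¹ = Dᴴ * fromBlocks L 1 1 L⁻¹ * D := by
    simp [D, fromBlocks_conjTranspose, fromBlocks_multiply]
  have h := hL.posSemidef_fromBlocks_one_one_inv.conjTranspose_mul_mul_same D
  rw [← hblock, hV.fromBlocks₁₁] at h
  simpa using h

end Matrix

theorem compression_inv_le_inv_general {N n : ℕ} (hn : 0 < n)
    {k : Fin n → ℕ}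
    (U : (i : Fin n) → Matrix (Fin N) (Fin (k i)) ℂ)
    (hU : ∀ i, (U i)ᴴ * U i = 1)
    (L : Matrix (Fin N) (Fin N) ℂ) (hL : L.PosDef)
    {κ : ℕ}
    (V : Matrix (Fin N) (Fin κ) ℂ) (hV : Vᴴ * V = 1) :
    (L⁻¹ - V * (Vᴴ * L * V)⁻¹ * Vᴴ).PosSemidef ∧
      (L⁻¹ - (n : ℂ)⁻¹ • (∑ i, U i * ((U i)ᴴ * L * U i)⁻¹ * (U i)ᴴ)).PosSemidef := by
  have compression {m : ℕ} (W : Matrix (Fin N) (Fin m) ℂ) (hW : Wᴴ * W = 1) :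
      (L⁻¹ - W * (Wᴴ * L * W)⁻¹ * Wᴴ).PosSemidef :=
    hL.posSemidef_inv_sub_mul_inv_conjTranspose_mul_mul
      (hL.conjTranspose_mul_mul_of_conjTranspose_mul_self_eq_one hW)
  have : Nonempty (Fin n) := ⟨⟨0, hn⟩⟩
  refine ⟨compression V hV, ?_⟩
  simpa using posSemidef_sub_inv_card_smul_sum fun i => compression (U i) (hU i)

/-- Compression bound in the Loewner order: U(U*LU)⁻¹U* ≼ L⁻¹ for U with orthonormal
columns, and consequently Z(L) = (1/n)∑ᵢ Uᵢ(Uᵢ*LUᵢ)⁻¹Uᵢ* ≼ L⁻¹. -/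
theorem compression_inv_le_inv {N n : ℕ} (hN : 0 < N) (hn : 0 < n)
    {k : Fin n → ℕ} (hk1 : ∀ i, 1 ≤ k i) (hkN : ∀ i, k i ≤ N)
    (U : (i : Fin n) → Matrix (Fin N) (Fin (k i)) ℂ)
    (hU : ∀ i, (U i)ᴴ * U i = 1)
    (L : Matrix (Fin N) (Fin N) ℂ) (hL : L.PosDef)
    {κ : ℕ} (hκ1 : 1 ≤ κ) (hκN : κ ≤ N)
    (V : Matrix (Fin N) (Fin κ) ℂ) (hV : Vᴴ * V = 1) :
    (L⁻¹ - V * (Vᴴ * L * V)⁻¹ * Vᴴ).PosSemidef ∧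
      (L⁻¹ - (n : ℂ)⁻¹ • (∑ i, U i * ((U i)ᴴ * L * U i)⁻¹ * (U i)ᴴ)).PosSemidef :=
  compression_inv_le_inv_general hn U hU L hL V hV
end
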